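/- arXiv:2601.01370 — 5 statements merged into one kernel-verified Lean document; each statement's English description precedes it below -/
import Mathlib

section
/- Let ωp, ωa, ωd, b, n > 0 with ωp > ωd·b. Define G^neutral = (ωp − ωd·b)·n / (3ωp − ωd·b + 2ωa) and G^opin = n − (ωp + ωa)·n / (3ωp − 2ωd·b + ωa) = 2(ωp − ωd·b)·n / (3ωp − 2ωd·b + ωa). Then G^neutral < G^opin. -/
/-- `G^neutral < G^opin`: amplified unification emerges more easily than amplified
polarization.  Here `G^opin = n − (ωp+ωa)n/(3ωp−2ωd·b+ωa) = 2(ωp−ωd·b)n/(3ωp−2ωd·b+ωa)`. -/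
theorem stmt_2 (ωp ωa ωd b n : ℝ)
    (hp : 0 < ωp) (ha : 0 < ωa) (hd : 0 < ωd) (hb : 0 < b) (hn : 0 < n)
    (h : ωd * b < ωp) :
    n - (ωp + ωa) * n / (3 * ωp - 2 * ωd * b + ωa)
        = 2 * (ωp - ωd * b) * n / (3 * ωp - 2 * ωd * b + ωa) ∧
      (ωp - ωd * b) * n / (3 * ωp - ωd * b + 2 * ωa)
        < n - (ωp + ωa) * n / (3 * ωp - 2 * ωd * b + ωa) := by
  have h1 : (0:ℝ) < 3 * ωp - 2 * ωd * b + ωa := by nlinarith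
  have h2 : (0:ℝ) < 3 * ωp - ωd * b + 2 * ωa := by nlinarith
  have heq : n - (ωp + ωa) * n / (3 * ωp - 2 * ωd * b + ωa)
      = 2 * (ωp - ωd * b) * n / (3 * ωp - 2 * ωd * b + ωa) := by
    rw [eq_div_iff h1.ne', sub_mul, div_mul_cancel₀ _ h1.ne']
    ring
  refine ⟨heq, ?_⟩
  rw [heq, div_lt_div_iff₀ h2 h1]
  nlinarith [mul_pos (mul_pos (sub_pos.2 h) hn) ha, mul_pos (mul_pos (sub_pos.2 h) hn) hp, mul_pos (mul_pos (sub_pos.2 h) hn) (mul_pos hd hb)]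
end

section
/- In the high-polarization regime with 0 < G₀ < n/3 and a, ωp, ωa, D > 0, a neutral agent's utility gain from posting opinionated content in the popularity-driven equilibrium, U^eq = ωp·a·(n−G₀)/2 − D·(a·n+1)·a·(n−G₀)/2, exceeds her utility gain under universal authentic expression, U^auth = ωp·a·G₀ + ωa·(a·G₀+1)·a·G₀ − D·a²·(n−G₀)²/2, if and only if D < D₀^high = (ωp·(n−3G₀) − 2ωa·G₀·(a·G₀+1))/((n−G₀)·(a·G₀+1)). -/
/-- A neutral agent's equilibrium utility gain exceeds her authentic-benchmark
utility gain iff `D < D₀^high`. -/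
theorem stmt_6 (n G₀ a ωp ωa D : ℝ)
    (hn : 0 < n) (hG0 : 0 < G₀) (hG0n : G₀ < n / 3)
    (ha : 0 < a) (hp : 0 < ωp) (hwa : 0 < ωa) (hD : 0 < D) :
    ωp * a * G₀ + ωa * (a * G₀ + 1) * (a * G₀) - D * a ^ 2 * (n - G₀) ^ 2 / 2
        < ωp * (a * (n - G₀) / 2) - D * (a * n + 1) * (a * (n - G₀) / 2) ↔
      D < (ωp * (n - 3 * G₀) - 2 * ωa * G₀ * (a * G₀ + 1)) / ((n - G₀) * (a * G₀ + 1)) := by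
  have h1 : 0 < n - G₀ := by linarith
  have h2 : 0 < a * G₀ + 1 := by positivity
  rw [lt_div_iff₀ (by positivity)]
  constructor <;> intro h <;> nlinarith [mul_pos ha h1, mul_pos ha h2]
end

section
/- In the high-polarization popularity-driven equilibrium with 0 < G₀ < n/3, the difference between an opinionated agent's equilibrium utility and her authentic-benchmark utility equals (a²/4)·(ωa·G₀·(n−G₀) + D·(6G₀² − 2n·G₀)); consequently, since 6G₀² < 2n·G₀, the opinionated agent is strictly worse off at equilibrium if and only if D > D±^high := ωa·G₀·(n−G₀)/(2n·G₀ − 6G₀²). -/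
/-- In the high-polarization popularity-driven equilibrium, the gap between an
opinionated agent's equilibrium and authentic-benchmark utilities equals
`(a²/4)(ωa·G₀(n−G₀) + D(6G₀² − 2nG₀))`; since `6G₀² < 2nG₀`, the agent is
strictly worse off iff `D > D±^high = ωa·G₀(n−G₀)/(2nG₀ − 6G₀²)`. -/
theorem stmt_7 (n G₀ a ωp ωa D : ℝ)
    (hn : 0 < n) (hG0 : 0 < G₀) (hG0n : G₀ < n / 3)
    (ha : 0 < a) (hp : 0 < ωp) (hwa : 0 < ωa) (hD : 0 < D) :
    (ωp * (a * (n - G₀) / 2) + ωa * (a * n / 2 + 1) * (a * (n - G₀) / 2)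
        - 2 * D * (a * n / 2) * (a * (n - G₀) / 2))
      - (ωp * (a * (n - G₀) / 2) + ωa * (a * (n - G₀) / 2 + 1) * (a * (n - G₀) / 2)
        - D * ((a * G₀) ^ 2 + 2 * (a * (n - G₀) / 2) ^ 2))
      = a ^ 2 / 4 * (ωa * G₀ * (n - G₀) + D * (6 * G₀ ^ 2 - 2 * n * G₀)) ∧
    6 * G₀ ^ 2 < 2 * n * G₀ ∧
    ((ωp * (a * (n - G₀) / 2) + ωa * (a * n / 2 + 1) * (a * (n - G₀) / 2)
        - 2 * D * (a * n / 2) * (a * (n - G₀) / 2))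
      < (ωp * (a * (n - G₀) / 2) + ωa * (a * (n - G₀) / 2 + 1) * (a * (n - G₀) / 2)
        - D * ((a * G₀) ^ 2 + 2 * (a * (n - G₀) / 2) ^ 2)) ↔
      ωa * G₀ * (n - G₀) / (2 * n * G₀ - 6 * G₀ ^ 2) < D) := by
  have hlt : 6 * G₀ ^ 2 < 2 * n * G₀ := by nlinarith
  have hpos : 0 < 2 * n * G₀ - 6 * G₀ ^ 2 := by linarith
  refine ⟨by ring, hlt, ?_⟩
  rw [div_lt_iff₀ hpos]
  constructor
  · intro h
    nlinarith [sq_nonneg a, mul_pos ha ha]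
  · intro h
    nlinarith [mul_pos ha ha]
end

section
/- For reals n, G₀ with 0 < G₀ < n/3 (hence n − 2G₀ > 0), the difference of the two welfare thresholds satisfies (ωp/ωa)′ − (ωp/ωa)* = (n + G₀)/(2(n − 2G₀)) > 0, where (ωp/ωa)* = 2G₀/(n−3G₀) and (ωp/ωa)′ = ((n−3G₀)(n+G₀) + 4G₀(n−2G₀))/(2(n−3G₀)(n−2G₀)). Hence (ωp/ωa)′ > (ωp/ωa)* always. -/
/-- `(ωp/ωa)′ − (ωp/ωa)* = (n + G₀)/(2(n − 2G₀)) > 0`, hence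
`(ωp/ωa)′ > (ωp/ωa)*` always under high polarization. -/
theorem stmt_16 (n G₀ : ℝ) (hG0 : 0 < G₀) (hG0n : G₀ < n / 3) :
    ((n - 3 * G₀) * (n + G₀) + 4 * G₀ * (n - 2 * G₀))
          / (2 * (n - 3 * G₀) * (n - 2 * G₀))
        - 2 * G₀ / (n - 3 * G₀)
      = (n + G₀) / (2 * (n - 2 * G₀)) ∧
    0 < (n + G₀) / (2 * (n - 2 * G₀)) ∧
    2 * G₀ / (n - 3 * G₀)
      < ((n - 3 * G₀) * (n + G₀) + 4 * G₀ * (n - 2 * G₀))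
          / (2 * (n - 3 * G₀) * (n - 2 * G₀)) := by
  have h3 : 0 < n - 3 * G₀ := by linarith
  have h2 : 0 < n - 2 * G₀ := by linarith
  have heq : ((n - 3 * G₀) * (n + G₀) + 4 * G₀ * (n - 2 * G₀))
          / (2 * (n - 3 * G₀) * (n - 2 * G₀))
        - 2 * G₀ / (n - 3 * G₀)
      = (n + G₀) / (2 * (n - 2 * G₀)) := by
    rw [div_sub_div _ _ (mul_ne_zero (mul_ne_zero two_ne_zero h3.ne') h2.ne') h3.ne',
      div_eq_div_iff (mul_ne_zero (mul_ne_zero (mul_ne_zero two_ne_zero h3.ne') h2.ne') h3.ne')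
        (mul_ne_zero two_ne_zero h2.ne')]
    ring
  have hpos : 0 < (n + G₀) / (2 * (n - 2 * G₀)) := div_pos (by linarith) (by linarith)
  exact ⟨heq, hpos, by linarith [heq ▸ hpos]⟩
end

section
/- In the high-polarization event (0 < G₀ < n/3) with ωp > ωd·b, social media under the representative algorithm is strictly more polarized than under the post–viewer–match algorithm if and only if G₀ < (ωp − ωd·b)·n/(3ωp + 2ωa − ωd·b) and k ≤ G₀·(ωp + ωa)/(ωp − ωd·b). In particular, if G₀ < G* but k ≤ G₀·(ωp+ωa)/(ωp−ωd·b), then neutral agents post opinionated under RA (since (ωp−ωd·b)·(n−G₀)/2 > (ωp+ωa)·G₀) but post authentically under PVM (since (ωp−ωd·b)·min{k,(n−G₀)/2} ≤ (ωp+ωa)·min{k,G₀}). -/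
/-- Equilibrium number of neutral posts under the representative algorithm:
neutral agents post opinionated (so `C₀ = 0`) iff deviation is strictly profitable. -/
noncomputable def C0RA (ωp ωa ωd b n G₀ : ℝ) : ℝ :=
  if (ωp + ωa) * G₀ < (ωp - ωd * b) * (n - G₀) / 2 then 0 else G₀

/-- Equilibrium number of neutral posts under the post–viewer–match algorithm
with visibility cap `k`. -/
noncomputable def C0PVM (ωp ωa ωd b n G₀ k : ℝ) : ℝ :=
  if (ωp + ωa) * min k G₀ < (ωp - ωd * b) * min k ((n - G₀) / 2) then 0 else G₀

/-- High-polarization event: RA is strictly more polarized than PVM iff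
`G₀ < G*` and `k ≤ G₀(ωp+ωa)/(ωp−ωd·b)`; in particular, under these conditions
neutral agents deviate under RA but post authentically under PVM. -/
theorem stmt_18 (ωp ωa ωd b n G₀ k : ℝ)
    (hp : 0 < ωp) (ha : 0 < ωa) (hd : 0 < ωd) (hb : 0 < b) (hn : 0 < n)
    (hk : 0 < k) (hG0 : 0 < G₀) (hG0n : G₀ < n / 3) (hpd : ωd * b < ωp) :
    (C0RA ωp ωa ωd b n G₀ < C0PVM ωp ωa ωd b n G₀ k ↔
      (G₀ < (ωp - ωd * b) * n / (3 * ωp + 2 * ωa - ωd * b) ∧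
        k ≤ G₀ * (ωp + ωa) / (ωp - ωd * b))) ∧
    (G₀ < (ωp - ωd * b) * n / (3 * ωp + 2 * ωa - ωd * b) →
      k ≤ G₀ * (ωp + ωa) / (ωp - ωd * b) →
      (ωp + ωa) * G₀ < (ωp - ωd * b) * (n - G₀) / 2 ∧
        (ωp - ωd * b) * min k ((n - G₀) / 2) ≤ (ωp + ωa) * min k G₀) := by
  have hD : 0 < ωp - ωd * b := by linarith
  have hA : 0 < ωp + ωa := by linarith
  have hden : (0:ℝ) < 3 * ωp + 2 * ωa - ωd * b := by linarith
  have hGhalf : G₀ < (n - G₀) / 2 := by linarith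
  have hstar : G₀ < (ωp - ωd * b) * n / (3 * ωp + 2 * ωa - ωd * b) ↔
      (ωp + ωa) * G₀ < (ωp - ωd * b) * (n - G₀) / 2 := by
    rw [lt_div_iff₀ hden]
    constructor <;> intro h <;> nlinarith
  have hkiff : k ≤ G₀ * (ωp + ωa) / (ωp - ωd * b) ↔
      k * (ωp - ωd * b) ≤ G₀ * (ωp + ωa) := le_div_iff₀ hD
  -- PVM non-deviation from k condition
  have hpvm : k * (ωp - ωd * b) ≤ G₀ * (ωp + ωa) →
      (ωp - ωd * b) * min k ((n - G₀) / 2) ≤ (ωp + ωa) * min k G₀ := by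
    intro hkc
    rcases le_total k G₀ with h | h
    · rw [min_eq_left h, min_eq_left (by linarith)]
      nlinarith [mul_nonneg (by positivity : (0:ℝ) ≤ ωd * b + ωa) hk.le]
    · rw [min_eq_right h]
      calc (ωp - ωd * b) * min k ((n - G₀) / 2) ≤ (ωp - ωd * b) * k :=
            mul_le_mul_of_nonneg_left (min_le_left _ _) hD.le
        _ ≤ (ωp + ωa) * G₀ := by nlinarith
  constructor
  · unfold C0RA C0PVM
    split_ifs with h1 h2
    · simp only [lt_self_iff_false, false_iff, not_and]
      intro _ hkc
      exact absurd (hpvm (hkiff.mp hkc)) (not_le.mpr h2)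
    · simp only [hG0, true_iff]
      refine ⟨hstar.mpr h1, hkiff.mpr ?_⟩
      push_neg at h2
      rcases le_total k G₀ with h | h
      · nlinarith [mul_nonneg (sub_nonneg.2 h) hD.le,
          mul_nonneg hG0.le (by positivity : (0:ℝ) ≤ ωd * b + ωa)]
      · rw [min_eq_right h] at h2
        rcases le_total k ((n - G₀) / 2) with h' | h'
        · rw [min_eq_left h'] at h2; linarith
        · rw [min_eq_right h'] at h2; nlinarith
    · constructor
      · intro habs; linarith
      · rintro ⟨hg, -⟩; exact absurd (hstar.mp hg) h1
    · constructor
      · intro habs; linarith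
      · rintro ⟨hg, -⟩; exact absurd (hstar.mp hg) h1
  · intro hg hkc
    exact ⟨hstar.mp hg, hpvm (hkiff.mp hkc)⟩
end
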